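/- Under the standing hypotheses of the soft quantitative quantiled Laplace principle, with V_ρ = (1/2) ∫ ‖θ − θ*‖₂² dρ(θ), one has ‖m(ρ) − θ*‖₂ ≤ r_G + η_G⁻¹ (u + G̃_r)^{ν_G} + [e^{−αu} / (c_in(q,r) ρ(B_r(θ*)))] · (√(2V_ρ) + β r_G) + [e^{α Δ_r} c_out(δ_lev) / (c_in(q,r) ρ(B_r(θ*)))] · (√(2V_ρ) + r_G). -/

import Mathlib

/-!
Write `w = e^{-αG} η` with `η = s((q - L)/τ)`, so that `m(ρ) = (∫ w)⁻¹ ∫ w x` and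
`‖m(ρ) - θ̃‖ ≤ (∫ w)⁻¹ ∫ w ‖x - θ̃‖`. Pointwise, `w ‖x - θ̃‖` is dominated according to three
regions. Near `Θ` (within `r_G`) with `G ≤ G(θ̃) + u + G̃_r`, the growth condition gives
`‖x - θ̃‖ ≤ η_G⁻¹ (u + G̃_r)^{ν_G}`. Near `Θ` with larger `G`, the Gibbs factor is at most
`e^{-α(G(θ̃) + G̃_r)} e^{-αu}`, and `∫ η ‖x - θ̃‖ ≤ ∫ ‖x - θ*‖ + β r_G` because `∫ η = β`.
Far from `Θ`, the Hölder error bound forces `L > q + δ_lev`, hence `η ≤ c_out`.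
The normalisation `∫ w` is at least `e^{-α(G(θ̃) + G̃_r)} c_in ρ(B_r(θ*))`, since on the ball
`η ≥ c_in` by the Lipschitz bound on `L`; the common factor `e^{-α(G(θ̃) + G̃_r)}` cancels.
Finally `∫ ‖x - θ*‖ ≤ √(2 V_ρ)` by Cauchy–Schwarz.
-/

open MeasureTheory Filter Topology ProbabilityTheory

lemma integral_le_sqrt_integral_sq {Ω : Type*} {_ : MeasurableSpace Ω} {μ : Measure Ω}
    [IsProbabilityMeasure μ] {X : Ω → ℝ} (hX : MemLp X 2 μ) :
    ∫ ω, X ω ∂μ ≤ √(∫ ω, X ω ^ 2 ∂μ) := by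
  have h := variance_eq_sub hX ▸ variance_nonneg X μ
  exact (le_abs_self _).trans (Real.abs_le_sqrt (by simpa using h))

lemma mul_measureReal_le_integral_of_le_on {X : Type*} [MeasurableSpace X] {μ : Measure X}
    [IsFiniteMeasure μ] {f : X → ℝ} {s : Set X} {c : ℝ} (hf : ∀ x, 0 ≤ f x)
    (hfi : Integrable f μ) (hs : MeasurableSet s) (hc : ∀ x ∈ s, c ≤ f x) :
    c * μ.real s ≤ ∫ x, f x ∂μ :=
  (setIntegral_ge_of_const_le_real hs (measure_ne_top μ s) hc hfi.integrableOn).trans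
    (setIntegral_le_integral hfi (.of_forall hf))

lemma continuous_of_abs_sub_le_mul_norm {E : Type*} [SeminormedAddCommGroup E] {f : E → ℝ}
    {K : ℝ} (hf : ∀ x y, |f x - f y| ≤ K * ‖x - y‖) : Continuous f := by
  refine (LipschitzWith.of_dist_le_mul (K := K.toNNReal) fun x y => ?_).continuous
  rw [Real.dist_eq, dist_eq_norm]
  exact (hf x y).trans (by gcongr; exact Real.le_coe_toNNReal K)

lemma subsingleton_of_abs_sub_le_mul_norm {E : Type*} [NormedAddCommGroup E] {f : E → ℝ}
    {K : ℝ} (hK : K < 0) (hf : ∀ x y, |f x - f y| ≤ K * ‖x - y‖) : Subsingleton E := by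
  refine ⟨fun x y => ?_⟩
  by_contra hxy
  have := norm_pos_iff.2 (sub_ne_zero.2 hxy)
  nlinarith [hf x y, abs_nonneg (f x - f y)]

lemma infDist_le_of_holderErrorBound {X : Type*} [PseudoMetricSpace X] {L : X → ℝ} {Θ : Set X}
    {Lmin ηL νL Linf r : ℝ} (hηL : 0 < ηL) (hνL : 0 < νL) (hr : 0 ≤ r)
    (hHolder : ∀ x, L x - Lmin ≤ Linf → Metric.infDist x Θ ≤ ηL⁻¹ * (L x - Lmin) ^ νL)
    {x : X} (hx₀ : Lmin ≤ L x) (hx : L x ≤ Lmin + min Linf ((ηL * r) ^ ((1 : ℝ) / νL))) :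
    Metric.infDist x Θ ≤ r := by
  have hpow : (L x - Lmin) ^ νL ≤ ηL * r := by
    rw [← Real.le_rpow_inv_iff_of_pos (by linarith) (by positivity) hνL, ← one_div]
    linarith [min_le_right Linf ((ηL * r) ^ ((1 : ℝ) / νL))]
  calc Metric.infDist x Θ ≤ ηL⁻¹ * (L x - Lmin) ^ νL :=
        hHolder x (by linarith [min_le_left Linf ((ηL * r) ^ ((1 : ℝ) / νL))])
    _ ≤ ηL⁻¹ * (ηL * r) := by gcongr
    _ = r := by field_simp

lemma norm_sub_le_of_growth {E : Type*} [SeminormedAddCommGroup E] {G : E → ℝ} {T : Set E}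
    {θ x : E} {ηG νG Ginf a : ℝ} (hηG : 0 ≤ ηG) (hνG : 0 ≤ νG) (hmin : ∀ y ∈ T, G θ ≤ G y)
    (hgrowth : ∀ y ∈ T, G y - G θ ≤ Ginf → ‖y - θ‖ ≤ ηG⁻¹ * (G y - G θ) ^ νG)
    (ha : a ≤ Ginf) (hx : x ∈ T) (hxa : G x - G θ ≤ a) : ‖x - θ‖ ≤ ηG⁻¹ * a ^ νG := by
  refine (hgrowth x hx (hxa.trans ha)).trans ?_
  have := sub_nonneg.2 (hmin x hx)
  gcongr

section SoftQuantileWeight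

variable {s : ℝ → ℝ} {τ q : ℝ}

lemma soft_le_of_lt_infDist {X : Type*} [PseudoMetricSpace X] {L : X → ℝ} {Θ : Set X}
    {Lmin ηL νL Linf r δ : ℝ} (hs : StrictMono s) (hτ : 0 < τ) (hηL : 0 < ηL) (hνL : 0 < νL)
    (hr : 0 ≤ r)
    (hHolder : ∀ x, L x - Lmin ≤ Linf → Metric.infDist x Θ ≤ ηL⁻¹ * (L x - Lmin) ^ νL)
    (hlev : q + δ ≤ Lmin + min Linf ((ηL * r) ^ ((1 : ℝ) / νL)))
    {x : X} (hx₀ : Lmin ≤ L x) (hx : r < Metric.infDist x Θ) :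
    s ((q - L x) / τ) ≤ s (-δ / τ) := by
  by_contra! h
  have hLx : -δ < q - L x := (div_lt_div_iff_of_pos_right hτ).1 (hs.lt_iff_lt.1 h)
  exact hx.not_ge (infDist_le_of_holderErrorBound hηL hνL hr hHolder hx₀ (by linarith))

lemma soft_le_soft_of_mem_ball {E : Type*} [SeminormedAddCommGroup E] {L : E → ℝ} {K r : ℝ}
    {θ x : E} (hs : Monotone s) (hτ : 0 < τ) (hK : 0 ≤ K)
    (hL : ∀ x y, |L x - L y| ≤ K * ‖x - y‖) (hx : x ∈ Metric.ball θ r) :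
    s ((q - L θ - K * r) / τ) ≤ s ((q - L x) / τ) := by
  refine hs ((div_le_div_iff_of_pos_right hτ).2 ?_)
  have hKr : K * ‖x - θ‖ ≤ K * r := mul_le_mul_of_nonneg_left (mem_ball_iff_norm.1 hx).le hK
  linarith [(le_abs_self _).trans (hL x θ)]

end SoftQuantileWeight

lemma norm_inv_integral_smul_integral_sub_le {E : Type*} [NormedAddCommGroup E]
    [NormedSpace ℝ E] [CompleteSpace E] [MeasurableSpace E] {μ : Measure E} {w : E → ℝ}
    (hw : ∀ x, 0 ≤ w x)
    (hwi : Integrable w μ) (hwx : Integrable (fun x => w x • x) μ) (hpos : 0 < ∫ x, w x ∂μ)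
    (c : E) :
    ‖(∫ x, w x ∂μ)⁻¹ • ∫ x, w x • x ∂μ - c‖ ≤ (∫ x, w x ∂μ)⁻¹ * ∫ x, w x * ‖x - c‖ ∂μ := by
  have hcenter : (∫ x, w x ∂μ)⁻¹ • ∫ x, w x • x ∂μ - c
      = (∫ x, w x ∂μ)⁻¹ • ∫ x, w x • (x - c) ∂μ := by
    simp_rw [smul_sub]
    rw [integral_sub hwx (hwi.smul_const c), integral_smul_const, smul_sub, smul_smul,
      inv_mul_cancel₀ hpos.ne', one_smul]
  rw [hcenter, norm_smul, Real.norm_of_nonneg (inv_nonneg.2 hpos.le)]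
  gcongr
  refine (norm_integral_le_integral_norm _).trans_eq (integral_congr_ae (.of_forall fun x => ?_))
  simp [norm_smul, abs_of_nonneg (hw x)]

lemma integral_mul_norm_sub_le {E : Type*} [NormedAddCommGroup E] [MeasurableSpace E]
    {μ : Measure E} {η : E → ℝ} (hη : ∀ x, 0 ≤ η x) (hη1 : ∀ x, η x ≤ 1)
    (hηi : Integrable η μ) {θ θ₀ : E} (hηd : Integrable (fun x => η x * ‖x - θ‖) μ)
    (hd₀ : Integrable (fun x => ‖x - θ₀‖) μ) :
    ∫ x, η x * ‖x - θ‖ ∂μ ≤ ∫ x, ‖x - θ₀‖ ∂μ + (∫ x, η x ∂μ) * ‖θ₀ - θ‖ := by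
  rw [← integral_mul_const, ← integral_add hd₀ (hηi.mul_const _)]
  refine integral_mono hηd (hd₀.fun_add (hηi.mul_const _)) fun x => ?_
  have := norm_sub_le_norm_sub_add_norm_sub x θ₀ θ
  nlinarith [hη x, hη1 x, norm_nonneg (x - θ₀)]

section ThreeRegions

variable {E : Type*} [NormedAddCommGroup E] {η e : E → ℝ} {T : Set E} {θ : E} {c b e₁ : ℝ}

lemma mul_mul_norm_sub_le_of_regions (hη : ∀ x, 0 ≤ η x) (he : ∀ x, 0 ≤ e x) (hc : 0 ≤ c)
    (hb : 0 ≤ b) (he₁ : 0 ≤ e₁) (hfar : ∀ x ∉ T, e x * η x ≤ b)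
    (hnear : ∀ x ∈ T, e₁ < e x → ‖x - θ‖ ≤ c) (x : E) :
    e x * η x * ‖x - θ‖ ≤ c * (e x * η x) + e₁ * (η x * ‖x - θ‖) + b * ‖x - θ‖ := by
  have hw := mul_nonneg (he x) (hη x)
  have hηd := mul_nonneg (hη x) (norm_nonneg (x - θ))
  have hcw := mul_nonneg hc hw
  have he₁ηd := mul_nonneg he₁ hηd
  by_cases hxT : x ∈ T
  · rcases le_or_gt (e x) e₁ with hlow | hhigh
    · nlinarith [mul_le_mul_of_nonneg_right hlow hηd, mul_nonneg hb (norm_nonneg (x - θ))]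
    · nlinarith [mul_le_mul_of_nonneg_left (hnear x hxT hhigh) hw,
        mul_nonneg hb (norm_nonneg (x - θ))]
  · nlinarith [mul_le_mul_of_nonneg_right (hfar x hxT) (norm_nonneg (x - θ))]

variable [MeasurableSpace E] {μ : Measure E}

lemma integral_mul_mul_norm_sub_le_of_regions
    (hwd : Integrable (fun x => e x * η x * ‖x - θ‖) μ) (hwi : Integrable (fun x => e x * η x) μ)
    (hηd : Integrable (fun x => η x * ‖x - θ‖) μ) (hd : Integrable (fun x => ‖x - θ‖) μ)
    (hη : ∀ x, 0 ≤ η x) (he : ∀ x, 0 ≤ e x) (hc : 0 ≤ c) (hb : 0 ≤ b) (he₁ : 0 ≤ e₁)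
    (hfar : ∀ x ∉ T, e x * η x ≤ b) (hnear : ∀ x ∈ T, e₁ < e x → ‖x - θ‖ ≤ c) :
    ∫ x, e x * η x * ‖x - θ‖ ∂μ
      ≤ c * ∫ x, e x * η x ∂μ + e₁ * ∫ x, η x * ‖x - θ‖ ∂μ + b * ∫ x, ‖x - θ‖ ∂μ := by
  have hbound := ((hwi.const_mul c).fun_add (hηd.const_mul e₁)).fun_add (hd.const_mul b)
  calc ∫ x, e x * η x * ‖x - θ‖ ∂μ
      ≤ ∫ x, (c * (e x * η x) + e₁ * (η x * ‖x - θ‖) + b * ‖x - θ‖) ∂μ :=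
        integral_mono hwd hbound (mul_mul_norm_sub_le_of_regions hη he hc hb he₁ hfar hnear)
    _ = _ := by
        rw [integral_add ((hwi.const_mul c).fun_add (hηd.const_mul e₁)) (hd.const_mul b),
          integral_add (hwi.const_mul c) (hηd.const_mul e₁), integral_const_mul,
          integral_const_mul, integral_const_mul]

variable [NormedSpace ℝ E] [CompleteSpace E] [IsProbabilityMeasure μ] {C k : ℝ} {B : Set E}

lemma norm_inv_integral_smul_integral_sub_le_of_regions (hμ : Integrable id μ)
    (hηm : AEStronglyMeasurable η μ) (hem : AEStronglyMeasurable e μ)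
    (hη : ∀ x, 0 ≤ η x) (hη1 : ∀ x, η x ≤ 1) (he : ∀ x, 0 ≤ e x) (heC : ∀ x, e x ≤ C)
    (hB : MeasurableSet B) (hk : 0 < k * μ.real B) (hwB : ∀ x ∈ B, k ≤ e x * η x)
    (hc : 0 ≤ c) (hb : 0 ≤ b) (he₁ : 0 ≤ e₁)
    (hfar : ∀ x ∉ T, e x * η x ≤ b) (hnear : ∀ x ∈ T, e₁ < e x → ‖x - θ‖ ≤ c) (θ₀ : E) :
    ‖(∫ x, e x * η x ∂μ)⁻¹ • ∫ x, (e x * η x) • x ∂μ - θ₀‖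
      ≤ ‖θ - θ₀‖ + c
        + e₁ / (k * μ.real B) * (∫ x, ‖x - θ₀‖ ∂μ + (∫ x, η x ∂μ) * ‖θ₀ - θ‖)
        + b / (k * μ.real B) * (∫ x, ‖x - θ₀‖ ∂μ + ‖θ₀ - θ‖) := by
  set I := ∫ x, e x * η x ∂μ
  have hw : ∀ x, 0 ≤ e x * η x := fun x => mul_nonneg (he x) (hη x)
  have hwm : AEStronglyMeasurable (fun x => e x * η x) μ := hem.mul hηm
  have hwC : ∀ x, ‖e x * η x‖ ≤ C := fun x => by
    rw [Real.norm_of_nonneg (hw x)]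
    nlinarith [mul_le_mul_of_nonneg_left (hη1 x) (he x), heC x]
  have hηC : ∀ x, ‖η x‖ ≤ 1 := fun x => by rw [Real.norm_of_nonneg (hη x)]; exact hη1 x
  have hd : ∀ θ', Integrable (fun x => ‖x - θ'‖) μ := fun θ' =>
    (hμ.sub (integrable_const θ')).norm
  have hηi : Integrable η μ := .of_bound hηm 1 (.of_forall hηC)
  have hwi : Integrable (fun x => e x * η x) μ := .of_bound hwm C (.of_forall hwC)
  have hwd : Integrable (fun x => e x * η x * ‖x - θ‖) μ := (hd θ).bdd_mul hwm (.of_forall hwC)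
  have hηd : Integrable (fun x => η x * ‖x - θ‖) μ := (hd θ).bdd_mul hηm (.of_forall hηC)
  have hwx : Integrable (fun x => (e x * η x) • x) μ := hμ.bdd_smul C hwm (.of_forall hwC)
  have hI : k * μ.real B ≤ I := mul_measureReal_le_integral_of_le_on hw hwi hB hwB
  have hIpos : 0 < I := hk.trans_le hI
  have hsplit := integral_mul_mul_norm_sub_le_of_regions hwd hwi hηd (hd θ) hη he hc hb he₁
    hfar hnear
  have hshift := integral_mul_norm_sub_le hη hη1 hηi hηd (hd θ₀)
  have hshift₁ : ∫ x, ‖x - θ‖ ∂μ ≤ ∫ x, ‖x - θ₀‖ ∂μ + ‖θ₀ - θ‖ := by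
    simpa using integral_mul_norm_sub_le (η := 1) (by simp) (by simp) (integrable_const 1)
      (by simpa using hd θ) (hd θ₀)
  calc _ ≤ ‖(∫ x, e x * η x ∂μ)⁻¹ • ∫ x, (e x * η x) • x ∂μ - θ‖ + ‖θ - θ₀‖ :=
        norm_sub_le_norm_sub_add_norm_sub _ _ _
    _ ≤ I⁻¹ * ∫ x, e x * η x * ‖x - θ‖ ∂μ + ‖θ - θ₀‖ := by
        gcongr; exact norm_inv_integral_smul_integral_sub_le hw hwi hwx hIpos θ
    _ ≤ I⁻¹ * (c * I + e₁ * ∫ x, η x * ‖x - θ‖ ∂μ + b * ∫ x, ‖x - θ‖ ∂μ) + ‖θ - θ₀‖ := by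
        gcongr ?_ + _
        exact mul_le_mul_of_nonneg_left hsplit (inv_nonneg.2 hIpos.le)
    _ = ‖θ - θ₀‖ + c + e₁ / I * ∫ x, η x * ‖x - θ‖ ∂μ + b / I * ∫ x, ‖x - θ‖ ∂μ := by
        field_simp [hIpos.ne']; ring
    _ ≤ _ := by
        have : 0 ≤ ∫ x, η x * ‖x - θ‖ ∂μ :=
          integral_nonneg fun x => mul_nonneg (hη x) (norm_nonneg (x - θ))
        gcongr

end ThreeRegions

lemma csSup_image_sub_const {X : Type*} {f : X → ℝ} {S : Set X} (hS : S.Nonempty)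
    (hf : BddAbove (f '' S)) (c : ℝ) :
    sSup ((fun x => f x - c) '' S) = sSup (f '' S) - c := by
  have := (OrderIso.addRight (-c)).map_csSup' (hS.image f) hf
  simp only [OrderIso.addRight_apply, Set.image_image, ← sub_eq_add_neg] at this
  exact this.symm

theorem soft_laplace_principle_firstMoment {E : Type*} [NormedAddCommGroup E]
    [NormedSpace ℝ E] [CompleteSpace E] [MeasurableSpace E] [OpensMeasurableSpace E]
    {μ : Measure E} [IsProbabilityMeasure μ] (hμ : Integrable id μ)
    {s : ℝ → ℝ} (hs_mono : StrictMono s) (hs_pos : ∀ z, 0 < s z) (hs_lt1 : ∀ z, s z < 1)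
    {τ α q : ℝ} (hτ : 0 < τ) (hα : 0 < α) {L G : E → ℝ} (hG : Measurable G)
    {LL : ℝ} (hLL : 0 ≤ LL) (hLlip : ∀ x y, |L x - L y| ≤ LL * ‖x - y‖)
    {Lmin Gmin : ℝ} (hLmin : ∀ x, Lmin ≤ L x) (hGmin : ∀ x, Gmin ≤ G x)
    {Θ : Set E} {θstar θtilde : E} (hLθ : L θstar = Lmin)
    {ηL νL Linf ηG νG Ginf rG r u δ Gtr Δr : ℝ} (hηL : 0 < ηL) (hνL : 0 < νL)
    (hHolder : ∀ x, L x - Lmin ≤ Linf → Metric.infDist x Θ ≤ ηL⁻¹ * (L x - Lmin) ^ νL)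
    (hηG : 0 < ηG) (hνG : 0 < νG) (hrG : 0 ≤ rG)
    (hθtilde_min : ∀ x, Metric.infDist x Θ ≤ rG → G θtilde ≤ G x)
    (hGgrowth : ∀ x, Metric.infDist x Θ ≤ rG → G x - G θtilde ≤ Ginf →
      ‖x - θtilde‖ ≤ ηG⁻¹ * (G x - G θtilde) ^ νG)
    (hlev : q + δ ≤ Lmin + min Linf ((ηL * rG) ^ ((1 : ℝ) / νL)))
    (hGtr : ∀ x ∈ Metric.ball θstar r, G x ≤ G θtilde + Gtr)
    (hΔr : G θtilde + Gtr ≤ Gmin + Δr) (hu : 0 ≤ u + Gtr) (hmass_cond : u + Gtr ≤ Ginf)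
    (hmass : 0 < μ.real (Metric.ball θstar r)) :
    ‖(∫ x, Real.exp (-α * G x) * s ((q - L x) / τ) ∂μ)⁻¹ •
        (∫ x, (Real.exp (-α * G x) * s ((q - L x) / τ)) • x ∂μ) - θstar‖
      ≤ ‖θtilde - θstar‖ + ηG⁻¹ * (u + Gtr) ^ νG
        + Real.exp (-α * u) / (s ((q - Lmin - LL * r) / τ) * μ.real (Metric.ball θstar r))
          * (∫ x, ‖x - θstar‖ ∂μ + (∫ x, s ((q - L x) / τ) ∂μ) * ‖θstar - θtilde‖)
        + Real.exp (α * Δr) * s (-δ / τ)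
            / (s ((q - Lmin - LL * r) / τ) * μ.real (Metric.ball θstar r))
          * (∫ x, ‖x - θstar‖ ∂μ + ‖θstar - θtilde‖) := by
  set M := G θtilde + Gtr
  set cin := s ((q - Lmin - LL * r) / τ)
  set cout := s (-δ / τ)
  have hcin : 0 < cin := hs_pos _
  have hcout : 0 < cout := hs_pos _
  have hexpM : Real.exp (-α * M) ≠ 0 := (Real.exp_pos _).ne'
  have heC : ∀ x, Real.exp (-α * G x) ≤ Real.exp (-α * Gmin) := fun x =>
    Real.exp_le_exp.2 (by nlinarith [hGmin x])
  have hball : ∀ x ∈ Metric.ball θstar r,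
      Real.exp (-α * M) * cin ≤ Real.exp (-α * G x) * s ((q - L x) / τ) := fun x hx => by
    have hsx := soft_le_soft_of_mem_ball (q := q) hs_mono.monotone hτ hLL hLlip hx
    rw [hLθ] at hsx
    exact mul_le_mul (Real.exp_le_exp.2 (by nlinarith [hGtr x hx])) hsx hcin.le
      (Real.exp_pos _).le
  have hfar : ∀ x ∉ {x | Metric.infDist x Θ ≤ rG},
      Real.exp (-α * G x) * s ((q - L x) / τ) ≤ Real.exp (-α * M) * (Real.exp (α * Δr) * cout) :=
    fun x hx => by
      have hexp : Real.exp (-α * Gmin) ≤ Real.exp (-α * M) * Real.exp (α * Δr) := by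
        rw [← Real.exp_add]; exact Real.exp_le_exp.2 (by nlinarith)
      rw [← mul_assoc]
      exact mul_le_mul ((heC x).trans hexp) (soft_le_of_lt_infDist hs_mono hτ hηL hνL hrG
        hHolder hlev (hLmin x) (not_le.1 hx)) (hs_pos _).le (by positivity)
  have hnear : ∀ x ∈ {x | Metric.infDist x Θ ≤ rG},
      Real.exp (-α * M) * Real.exp (-α * u) < Real.exp (-α * G x) →
        ‖x - θtilde‖ ≤ ηG⁻¹ * (u + Gtr) ^ νG := fun x hx he => by
    rw [← Real.exp_add, Real.exp_lt_exp] at he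
    exact norm_sub_le_of_growth hηG.le hνG.le hθtilde_min hGgrowth hmass_cond hx
      (by nlinarith)
  have hLc := continuous_of_abs_sub_le_mul_norm hLlip
  have key := norm_inv_integral_smul_integral_sub_le_of_regions hμ
    (hs_mono.monotone.measurable.comp
      ((measurable_const.sub hLc.measurable).div_const τ)).aestronglyMeasurable
    (Real.measurable_exp.comp (measurable_const.mul hG)).aestronglyMeasurable
    (fun x => (hs_pos _).le) (fun x => (hs_lt1 _).le) (fun x => (Real.exp_pos _).le) heC
    measurableSet_ball (by positivity) hball (by positivity) (by positivity) (by positivity)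
    hfar hnear θstar
  rwa [mul_assoc, mul_div_mul_left _ _ hexpM, mul_div_mul_left _ _ hexpM] at key

theorem soft_laplace_principle_variance_general
    (d : ℕ) (s : ℝ → ℝ)
    (hs_mono : StrictMono s)
    (hs_pos : ∀ z, 0 < s z) (hs_lt1 : ∀ z, s z < 1)
    (β τ α : ℝ) (hβ : 0 < β ∧ β < 1) (hτ : 0 < τ) (hα : 0 < α)
    (L G : EuclideanSpace ℝ (Fin d) → ℝ)
    (LL : ℝ) (hLlip : ∀ x y, |L x - L y| ≤ LL * ‖x - y‖)
    (LG : ℝ) (hGlip : ∀ x y, |G x - G y| ≤ LG * ‖x - y‖)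
    (Lmin Lmax : ℝ) (hLbd : ∀ x, Lmin ≤ L x ∧ L x ≤ Lmax)
    (Gmin Gmax : ℝ) (hGbd : ∀ x, Gmin ≤ G x ∧ G x ≤ Gmax)
    (Θ : Set (EuclideanSpace ℝ (Fin d)))
    (hΘ : Θ = {x | L x = Lmin})
    (θstar : EuclideanSpace ℝ (Fin d)) (hθstar : θstar ∈ Θ)
    (ηL νL Linf : ℝ) (hηL : 0 < ηL) (hνL : 0 < νL)
    (hHolder : ∀ x, L x - Lmin ≤ Linf →
      Metric.infDist x Θ ≤ ηL⁻¹ * (L x - Lmin) ^ νL)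
    (RG : ℝ)
    (ηG νG Ginf : ℝ) (hηG : 0 < ηG) (hνG : 0 < νG)
    (rG : ℝ) (hrG : 0 < rG ∧ rG ≤ RG)
    (θtilde : EuclideanSpace ℝ (Fin d))
    (hθtilde_ball : ‖θtilde - θstar‖ < rG)
    (hθtilde_min : ∀ x, Metric.infDist x Θ ≤ rG → G θtilde ≤ G x)
    (hGgrowth : ∀ x, Metric.infDist x Θ ≤ rG → G x - G θtilde ≤ Ginf →
      ‖x - θtilde‖ ≤ ηG⁻¹ * (G x - G θtilde) ^ νG)
    (ρ : Measure (EuclideanSpace ℝ (Fin d))) [IsProbabilityMeasure ρ]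
    (hmom2 : Integrable (fun x => ‖x‖ ^ 2) ρ)
    (q : ℝ) (hq : ∫ x, s ((q - L x) / τ) ∂ρ = β)
    (r u δlev : ℝ) (hr : 0 < r ∧ r ≤ rG) (hu : 0 < u)
    (Gtr Δr : ℝ)
    (hGtr : Gtr = sSup ((fun θ => G θ - G θtilde) '' Metric.ball θstar r))
    (hΔr : Δr = sSup (G '' Metric.ball θstar r) - Gmin)
    (hlev : q + δlev ≤ Lmin + min Linf ((ηL * rG) ^ ((1 : ℝ) / νL)))
    (hmass_cond : u + Gtr ≤ Ginf)
    (hmass : 0 < (ρ (Metric.ball θstar r)).toReal)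
    (V : ℝ) (hV : V = (1 / 2) * ∫ θ, ‖θ - θstar‖ ^ 2 ∂ρ) :
    ‖(∫ x, Real.exp (-α * G x) * s ((q - L x) / τ) ∂ρ)⁻¹ •
        (∫ x, (Real.exp (-α * G x) * s ((q - L x) / τ)) • x ∂ρ) - θstar‖
      ≤ rG + ηG⁻¹ * (u + Gtr) ^ νG
        + Real.exp (-α * u)
            / (s ((q - Lmin - LL * r) / τ) * (ρ (Metric.ball θstar r)).toReal)
          * (Real.sqrt (2 * V) + β * rG)
        + Real.exp (α * Δr) * s (-δlev / τ)
            / (s ((q - Lmin - LL * r) / τ) * (ρ (Metric.ball θstar r)).toReal)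
          * (Real.sqrt (2 * V) + rG) := by
  obtain ⟨hβ0, -⟩ := hβ
  obtain ⟨hrG0, -⟩ := hrG
  have hθstarB : θstar ∈ Metric.ball θstar r := Metric.mem_ball_self hr.1
  have hGbdd : BddAbove (G '' Metric.ball θstar r) :=
    ⟨Gmax, by rintro _ ⟨x, -, rfl⟩; exact (hGbd x).2⟩
  rw [csSup_image_sub_const ⟨θstar, hθstarB⟩ hGbdd] at hGtr
  have hGB : ∀ x ∈ Metric.ball θstar r, G x ≤ G θtilde + Gtr := fun x hx => by
    linarith [le_csSup hGbdd ⟨x, hx, rfl⟩]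
  have hGtr0 : 0 ≤ Gtr := by
    linarith [hGB θstar hθstarB,
      hθtilde_min θstar ((Metric.infDist_zero_of_mem hθstar).trans_le hrG0.le)]
  have hcin := hs_pos ((q - Lmin - LL * r) / τ)
  have hcout := hs_pos (-δlev / τ)
  rcases lt_or_ge LL 0 with hLL | hLL
  · have := subsingleton_of_abs_sub_le_mul_norm hLL hLlip
    rw [Subsingleton.elim (_ • _) θstar, sub_self, norm_zero]
    positivity
  have hLθ : L θstar = Lmin := by rw [hΘ] at hθstar; exact hθstar
  have hX : MemLp id 2 ρ := (memLp_two_iff_integrable_sq_norm aestronglyMeasurable_id).2 hmom2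
  have hD : ∫ x, ‖x - θstar‖ ∂ρ ≤ √(2 * V) := by
    have := integral_le_sqrt_integral_sq (hX.sub (memLp_const θstar)).norm
    rwa [hV, ← mul_assoc, mul_one_div_cancel two_ne_zero, one_mul]
  have key := soft_laplace_principle_firstMoment (Δr := Δr) (hX.integrable one_le_two)
    hs_mono hs_pos hs_lt1 hτ hα (continuous_of_abs_sub_le_mul_norm hGlip).measurable hLL hLlip
    (fun x => (hLbd x).1) (fun x => (hGbd x).1) hLθ hηL hνL hHolder hηG hνG hrG0.le
    hθtilde_min hGgrowth hlev hGB (by linarith) (by linarith) hmass_cond hmass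
  have hθ : ‖θstar - θtilde‖ ≤ rG := norm_sub_rev θtilde θstar ▸ hθtilde_ball.le
  rw [hq, measureReal_def] at key
  refine key.trans ?_
  gcongr

/-- Soft quantitative quantiled Laplace principle, variance form
(with `V_ρ = (1/2) ∫ ‖θ - θ*‖² dρ`). -/
theorem soft_laplace_principle_variance
    (d : ℕ) (s : ℝ → ℝ)
    (hs_cont : Continuous s) (hs_mono : StrictMono s)
    (hs_pos : ∀ z, 0 < s z) (hs_lt1 : ∀ z, s z < 1)
    (hs_bot : Tendsto s atBot (𝓝 0)) (hs_top : Tendsto s atTop (𝓝 1))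
    (β τ α : ℝ) (hβ : 0 < β ∧ β < 1) (hτ : 0 < τ) (hα : 0 < α)
    (L G : EuclideanSpace ℝ (Fin d) → ℝ)
    (LL : ℝ) (hLlip : ∀ x y, |L x - L y| ≤ LL * ‖x - y‖)
    (LG : ℝ) (hGlip : ∀ x y, |G x - G y| ≤ LG * ‖x - y‖)
    (Lmin Lmax : ℝ) (hLbd : ∀ x, Lmin ≤ L x ∧ L x ≤ Lmax)
    (Gmin Gmax : ℝ) (hGbd : ∀ x, Gmin ≤ G x ∧ G x ≤ Gmax)
    (Θ : Set (EuclideanSpace ℝ (Fin d)))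
    (hΘ : Θ = {x | L x = Lmin}) (hΘne : Θ.Nonempty)
    (θstar : EuclideanSpace ℝ (Fin d)) (hθstar : θstar ∈ Θ)
    (ηL νL Linf : ℝ) (hηL : 0 < ηL) (hνL : 0 < νL) (hLinf : 0 < Linf)
    (hHolder : ∀ x, L x - Lmin ≤ Linf →
      Metric.infDist x Θ ≤ ηL⁻¹ * (L x - Lmin) ^ νL)
    (RG : ℝ) (hRG : 0 < RG)
    (ηG νG Ginf : ℝ) (hηG : 0 < ηG) (hνG : 0 < νG) (hGinf : 0 < Ginf)
    (rG : ℝ) (hrG : 0 < rG ∧ rG ≤ RG)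
    (θtilde : EuclideanSpace ℝ (Fin d))
    (hθtilde_ball : ‖θtilde - θstar‖ < rG)
    (hθtilde_min : ∀ x, Metric.infDist x Θ ≤ rG → G θtilde ≤ G x)
    (hGgrowth : ∀ x, Metric.infDist x Θ ≤ rG → G x - G θtilde ≤ Ginf →
      ‖x - θtilde‖ ≤ ηG⁻¹ * (G x - G θtilde) ^ νG)
    (ρ : Measure (EuclideanSpace ℝ (Fin d))) [IsProbabilityMeasure ρ]
    (hmom2 : Integrable (fun x => ‖x‖ ^ 2) ρ)
    (q : ℝ) (hq : ∫ x, s ((q - L x) / τ) ∂ρ = β)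
    (r u δlev : ℝ) (hr : 0 < r ∧ r ≤ rG) (hu : 0 < u) (hδ : 0 < δlev)
    (Gtr Δr : ℝ)
    (hGtr : Gtr = sSup ((fun θ => G θ - G θtilde) '' Metric.ball θstar r))
    (hΔr : Δr = sSup (G '' Metric.ball θstar r) - Gmin)
    (hlev : q + δlev ≤ Lmin + min Linf ((ηL * rG) ^ ((1 : ℝ) / νL)))
    (hmass_cond : u + Gtr ≤ Ginf)
    (hmass : 0 < (ρ (Metric.ball θstar r)).toReal)
    (V : ℝ) (hV : V = (1 / 2) * ∫ θ, ‖θ - θstar‖ ^ 2 ∂ρ) :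
    ‖(∫ x, Real.exp (-α * G x) * s ((q - L x) / τ) ∂ρ)⁻¹ •
        (∫ x, (Real.exp (-α * G x) * s ((q - L x) / τ)) • x ∂ρ) - θstar‖
      ≤ rG + ηG⁻¹ * (u + Gtr) ^ νG
        + Real.exp (-α * u)
            / (s ((q - Lmin - LL * r) / τ) * (ρ (Metric.ball θstar r)).toReal)
          * (Real.sqrt (2 * V) + β * rG)
        + Real.exp (α * Δr) * s (-δlev / τ)
            / (s ((q - Lmin - LL * r) / τ) * (ρ (Metric.ball θstar r)).toReal)
          * (Real.sqrt (2 * V) + rG) :=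
  soft_laplace_principle_variance_general d s hs_mono hs_pos hs_lt1 β τ α hβ hτ hα L G LL hLlip LG
    hGlip Lmin Lmax hLbd Gmin Gmax hGbd Θ hΘ θstar hθstar ηL νL Linf hηL hνL hHolder RG ηG νG Ginf
    hηG hνG rG hrG θtilde hθtilde_ball hθtilde_min hGgrowth ρ hmom2 q hq r u δlev hr hu Gtr Δr hGtr
    hΔr hlev hmass_cond hmass V hV
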